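/- arXiv:2603.11079 — 8 statements merged into one kernel-verified Lean document; each statement's English description precedes it below -/
import Mathlib

section
/- Let N ≥ 2, let A be a Hermitian N×N complex matrix with τ = tr A, let v ∈ ℂ^N be a unit vector with α = ⟨v, A v⟩, and assume α > 0, τ > 0 and Nα > τ. Then the Choi matrix Z_A = (1/α)·A ⊗ P + (1/(N/τ − 1/α))·(𝟙 − A/α) ⊗ (𝟙/τ − P/α) is positive semidefinite if and only if both A ≥ ((τ − α)/(N − 1))·𝟙 and α·𝟙 ≥ A hold in the Loewner (positive semidefinite) order. -/
/-!
Writing `c₁ = (N - 1)/(Nα - τ)`, `c₂ = 1/(Nα - τ)` and `β = (τ - α)/(N - 1)`, the Choi matrix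
splits as `Z_A = (c₁ (A - β)) ⊗ P + (c₂ (α - A)) ⊗ (1 - P)`, with `c₁, c₂ > 0`. Since `P` and
`1 - P` are complementary orthogonal projections, such a sum is positive semidefinite iff both left
factors are: evaluating the quadratic form at `x ⊗ v̄` (fixed by `P`) and at `x ⊗ u` with
`u ⊥ v̄` (killed by `P`, and existing as `N ≥ 2`) isolates one factor at a time.
-/

open Matrix Kronecker ComplexOrder
open scoped MatrixOrder

namespace Matrix

variable {m n : Type*}

theorem posSemidef_real_smul_iff {c : ℝ} (hc : 0 < c) {M : Matrix n n ℂ} :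
    ((c : ℂ) • M).PosSemidef ↔ M.PosSemidef := by
  have hc' : (0 : ℂ) < c := by exact_mod_cast hc
  refine ⟨fun h => ?_, fun h => h.smul hc'.le⟩
  have := h.smul (inv_nonneg.mpr hc'.le)
  rwa [smul_smul, inv_mul_cancel₀ hc'.ne', one_smul] at this

variable [Fintype m] [Fintype n]

/-- Over `ℂ`, a nonnegative quadratic form forces the matrix to be Hermitian. -/
theorem posSemidef_of_forall_dotProduct_mulVec_nonneg {M : Matrix n n ℂ}
    (h : ∀ x, 0 ≤ star x ⬝ᵥ (M *ᵥ x)) : M.PosSemidef := by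
  classical
  rw [← isPositive_toEuclideanLin_iff, LinearMap.isPositive_iff_complex]
  intro x
  have hx : 0 ≤ inner ℂ (M.toEuclideanLin x) x := by
    rw [← inner_conj_symm, EuclideanSpace.inner_eq_star_dotProduct, dotProduct_comm]
    simpa using star_nonneg_iff.mpr (h x)
  exact ⟨(Complex.eq_re_of_ofReal_le (r := 0) (by simpa using hx)).symm,
    (Complex.nonneg_iff.mp hx).1⟩

theorem dotProduct_kronecker_mulVec {R : Type*} [CommRing R] [StarRing R]
    (B : Matrix m m R) (C : Matrix n n R) (x : m → R) (y : n → R) :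
    star (fun p : m × n => x p.1 * y p.2) ⬝ᵥ (B ⊗ₖ C) *ᵥ (fun p => x p.1 * y p.2) =
      (star x ⬝ᵥ B *ᵥ x) * (star y ⬝ᵥ C *ᵥ y) := by
  have hmulVec : (B ⊗ₖ C) *ᵥ (fun p : m × n => x p.1 * y p.2) =
      fun p => (B *ᵥ x) p.1 * (C *ᵥ y) p.2 := by
    ext ⟨i, j⟩
    simp only [mulVec, dotProduct, kroneckerMap_apply, Fintype.sum_prod_type, Finset.sum_mul_sum]
    exact Finset.sum_congr rfl fun k _ => Finset.sum_congr rfl fun l _ => by ring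
  simp only [hmulVec, dotProduct, Fintype.sum_prod_type, Pi.star_apply, star_mul',
    Finset.sum_mul_sum]
  exact Finset.sum_congr rfl fun i _ => Finset.sum_congr rfl fun j _ => by ring

theorem posSemidef_of_posSemidef_kronecker_add {M M' : Matrix m m ℂ} {P Q : Matrix n n ℂ}
    {w : n → ℂ} (hw : w ≠ 0) (hPw : P *ᵥ w = w) (hQw : Q *ᵥ w = 0)
    (h : (M ⊗ₖ P + M' ⊗ₖ Q).PosSemidef) : M.PosSemidef := by
  refine posSemidef_of_forall_dotProduct_mulVec_nonneg fun x => ?_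
  have hxw := h.dotProduct_mulVec_nonneg fun p => x p.1 * w p.2
  rw [add_mulVec, dotProduct_add, dotProduct_kronecker_mulVec, dotProduct_kronecker_mulVec,
    hPw, hQw, dotProduct_zero, mul_zero, add_zero] at hxw
  have hw' : 0 < star w ⬝ᵥ w := dotProduct_star_self_pos_iff.mpr hw
  simpa [hw'.ne'] using mul_nonneg hxw (inv_nonneg.mpr hw'.le)

theorem posSemidef_kronecker_add_kronecker_one_sub_iff [DecidableEq m] [DecidableEq n]
    {P : Matrix n n ℂ} (hP : IsStarProjection P) {w u : n → ℂ} (hw : w ≠ 0) (hPw : P *ᵥ w = w)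
    (hu : u ≠ 0) (hPu : P *ᵥ u = 0) {M₁ M₂ : Matrix m m ℂ} :
    (M₁ ⊗ₖ P + M₂ ⊗ₖ (1 - P)).PosSemidef ↔ M₁.PosSemidef ∧ M₂.PosSemidef := by
  have hw' : (1 - P) *ᵥ w = 0 := by rw [sub_mulVec, one_mulVec, hPw, sub_self]
  have hu' : (1 - P) *ᵥ u = u := by rw [sub_mulVec, one_mulVec, hPu, sub_zero]
  refine ⟨fun h => ⟨posSemidef_of_posSemidef_kronecker_add hw hPw hw' h,
    posSemidef_of_posSemidef_kronecker_add hu hu' hPu (add_comm (M₁ ⊗ₖ P) _ ▸ h)⟩, ?_⟩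
  rintro ⟨h₁, h₂⟩
  exact (h₁.kronecker hP.nonneg.posSemidef).add (h₂.kronecker hP.one_sub_nonneg.posSemidef)

theorem isStarProjection_vecMulVec_star_self {R : Type*} [CommRing R] [StarRing R] {v : n → R}
    (hv : star v ⬝ᵥ v = 1) : IsStarProjection (vecMulVec (star v) v) where
  isIdempotentElem := by
    rw [IsIdempotentElem, vecMulVec_mul_vecMulVec, dotProduct_comm, hv, one_smul]
  isSelfAdjoint := by
    rw [IsSelfAdjoint, star_eq_conjTranspose, conjTranspose_vecMulVec, star_star]

theorem exists_ne_zero_dotProduct_eq_zero {K : Type*} [Field K] (hn : 1 < Fintype.card n)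
    (v : n → K) : ∃ u ≠ 0, v ⬝ᵥ u = 0 := by
  obtain ⟨u, hu, hu0⟩ := Submodule.exists_mem_ne_zero_of_ne_bot <|
    (dotProductBilin K K v).ker_ne_bot_of_finrank_lt (by simpa using hn)
  exact ⟨u, hu0, hu⟩

end Matrix

section Choi

variable {m n : Type*} [DecidableEq m] [DecidableEq n]

noncomputable def choiMatrix (d τ α : ℝ) (A : Matrix m m ℂ) (P : Matrix n n ℂ) :
    Matrix (m × n) (m × n) ℂ :=
  (α : ℂ)⁻¹ • (A ⊗ₖ P) + (((d / τ - 1 / α : ℝ) : ℂ))⁻¹ •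
    ((1 - (α : ℂ)⁻¹ • A) ⊗ₖ ((τ : ℂ)⁻¹ • 1 - (α : ℂ)⁻¹ • P))

theorem choiMatrix_eq {d τ α : ℝ} (hα : α ≠ 0) (hτ : τ ≠ 0) (hdατ : d * α - τ ≠ 0)
    (hd : d - 1 ≠ 0) (A : Matrix m m ℂ) (P : Matrix n n ℂ) :
    choiMatrix d τ α A P =
      ((((d - 1) / (d * α - τ) : ℝ) : ℂ) • (A - (((τ - α) / (d - 1) : ℝ) : ℂ) • 1)) ⊗ₖ P +
        (((1 / (d * α - τ) : ℝ) : ℂ) • ((α : ℂ) • 1 - A)) ⊗ₖ (1 - P) := by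
  have hdατ' : (α : ℂ) * d - τ ≠ 0 := by rw [mul_comm]; exact_mod_cast hdατ
  have hd' : (d : ℂ) - 1 ≠ 0 := by exact_mod_cast hd
  ext ⟨i, j⟩ ⟨k, l⟩
  simp only [choiMatrix, Matrix.add_apply, Matrix.smul_apply, Matrix.sub_apply,
    kroneckerMap_apply, one_apply, smul_eq_mul]
  push_cast
  generalize (if i = k then (1 : ℂ) else 0) = δ₁
  generalize (if j = l then (1 : ℂ) else 0) = δ₂
  field_simp
  ring

end Choi

theorem choi_posSemidef_iff_general (N : ℕ) (hN : 2 ≤ N)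
    (A : Matrix (Fin N) (Fin N) ℂ)
    (v : Fin N → ℂ) (hv : star v ⬝ᵥ v = 1)
    (τ α : ℝ)
    (hα0 : 0 < α) (hτ0 : 0 < τ) (hNα : τ < (N : ℝ) * α)
    (P : Matrix (Fin N) (Fin N) ℂ) (hP : P = vecMulVec (star v) v)
    (Z : Matrix (Fin N × Fin N) (Fin N × Fin N) ℂ)
    (hZ : Z = ((α : ℂ))⁻¹ • (A ⊗ₖ P) +
      ((((N : ℝ) / τ - 1 / α : ℝ) : ℂ))⁻¹ •
        ((1 - ((α : ℂ))⁻¹ • A) ⊗ₖ (((τ : ℂ))⁻¹ • 1 - ((α : ℂ))⁻¹ • P))) :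
    Z.PosSemidef ↔
      ((A - ((((τ - α) / ((N : ℝ) - 1)) : ℝ) : ℂ) • 1).PosSemidef ∧
        (((α : ℝ) : ℂ) • 1 - A).PosSemidef) := by
  have hN1 : 0 < (N : ℝ) - 1 := by
    have : (2 : ℝ) ≤ N := by exact_mod_cast hN
    linarith
  have hNατ : 0 < (N : ℝ) * α - τ := sub_pos.mpr hNα
  have hvv : v ⬝ᵥ star v = 1 := by rw [dotProduct_comm, hv]
  obtain ⟨u, hu, hvu⟩ := exists_ne_zero_dotProduct_eq_zero (by rw [Fintype.card_fin]; omega) v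
  have hZ' : Z = choiMatrix N τ α A P := hZ
  subst hP
  rw [hZ', choiMatrix_eq hα0.ne' hτ0.ne' hNατ.ne' hN1.ne',
    posSemidef_kronecker_add_kronecker_one_sub_iff (isStarProjection_vecMulVec_star_self hv)
      (w := star v) (fun h => by simp [h] at hv) (by rw [vecMulVec_mulVec, hvv]; simp) hu
      (by rw [vecMulVec_mulVec, hvu]; simp),
    posSemidef_real_smul_iff (by positivity), posSemidef_real_smul_iff (by positivity)]

/-- For `N ≥ 2`, `A` Hermitian with trace `τ`, `v` a unit vector with
`α = ⟨v, A v⟩`, and `α > 0`, `τ > 0`, `N·α > τ`, the Choi matrix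
`Z_A = (1/α)·A ⊗ P + (1/(N/τ − 1/α))·(𝟙 − A/α) ⊗ (𝟙/τ − P/α)` (with `P = v̄ v̄*`)
is positive semidefinite iff `A ≥ ((τ − α)/(N − 1))·𝟙` and `α·𝟙 ≥ A`. -/
theorem choi_posSemidef_iff (N : ℕ) (hN : 2 ≤ N)
    (A : Matrix (Fin N) (Fin N) ℂ) (hA : A.IsHermitian)
    (v : Fin N → ℂ) (hv : star v ⬝ᵥ v = 1)
    (τ α : ℝ) (hτ : A.trace = (τ : ℂ)) (hα : star v ⬝ᵥ A.mulVec v = (α : ℂ))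
    (hα0 : 0 < α) (hτ0 : 0 < τ) (hNα : τ < (N : ℝ) * α)
    (P : Matrix (Fin N) (Fin N) ℂ) (hP : P = vecMulVec (star v) v)
    (Z : Matrix (Fin N × Fin N) (Fin N × Fin N) ℂ)
    (hZ : Z = ((α : ℂ))⁻¹ • (A ⊗ₖ P) +
      ((((N : ℝ) / τ - 1 / α : ℝ) : ℂ))⁻¹ •
        ((1 - ((α : ℂ))⁻¹ • A) ⊗ₖ (((τ : ℂ))⁻¹ • 1 - ((α : ℂ))⁻¹ • P))) :
    Z.PosSemidef ↔
      ((A - ((((τ - α) / ((N : ℝ) - 1)) : ℝ) : ℂ) • 1).PosSemidef ∧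
        (((α : ℝ) : ℂ) • 1 - A).PosSemidef) :=
  choi_posSemidef_iff_general N hN A v hv τ α hα0 hτ0 hNα P hP Z hZ
end

section
/- Let N ≥ 2, let A be a Hermitian N×N complex matrix with τ = tr A, let v ∈ ℂ^N be a unit vector with α = ⟨v, A v⟩, and assume α > 0, τ > 0 and Nα > τ. If the Choi matrix Z_A = (1/α)·A ⊗ P + (1/(N/τ − 1/α))·(𝟙 − A/α) ⊗ (𝟙/τ − P/α) is positive semidefinite, then A − ((τ − α)/(N − 1))·𝟙 is positive semidefinite. -/
open Matrix Kronecker ComplexOrder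

/-!
Test `Z_A` against the product vector `x ⊗ v̄`. Since `P v̄ = v̄`, both Kronecker terms factor
into scalar quadratic forms and positivity of `Z_A` gives, with `q = ⟨x, A x⟩` and `s = ‖x‖²`,
`0 ≤ q/α + (N/τ - 1/α)⁻¹ (s - q/α)(1/τ - 1/α)`. Multiplying by `Nα - τ > 0` clears all
denominators and leaves `(N - 1) q + (α - τ) s ≥ 0`, i.e. `q ≥ (τ - α)/(N - 1) · s`.
-/

section

variable {m n R : Type*} [Fintype m] [Fintype n] [CommSemiring R] [StarRing R]

theorem star_dotProduct_kronecker_mulVec (A : Matrix m m R) (B : Matrix n n R)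
    (x : m → R) (y : n → R) :
    star (fun p : m × n => x p.1 * y p.2) ⬝ᵥ (A ⊗ₖ B) *ᵥ (fun p : m × n => x p.1 * y p.2) =
      (star x ⬝ᵥ A *ᵥ x) * (star y ⬝ᵥ B *ᵥ y) := by
  have hmulVec : (A ⊗ₖ B) *ᵥ (fun p : m × n => x p.1 * y p.2) =
      fun p => (A *ᵥ x) p.1 * (B *ᵥ y) p.2 := by
    ext p
    simp only [mulVec, dotProduct, kroneckerMap_apply, Fintype.sum_prod_type]
    rw [Fintype.sum_mul_sum]
    exact Fintype.sum_congr _ _ fun k => Fintype.sum_congr _ _ fun l => by ring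
  rw [hmulVec]
  simp only [dotProduct, Pi.star_apply, star_mul', Fintype.sum_prod_type]
  rw [Fintype.sum_mul_sum]
  exact Fintype.sum_congr _ _ fun k => Fintype.sum_congr _ _ fun l => by ring

theorem dotProduct_vecMulVec_star_mulVec_star (u : n → R) :
    u ⬝ᵥ vecMulVec (star u) u *ᵥ star u = (star u ⬝ᵥ u) * (star u ⬝ᵥ u) := by
  rw [vecMulVec_mulVec, op_smul_eq_smul, dotProduct_smul, smul_eq_mul, dotProduct_comm u]

end

theorem Matrix.IsHermitian.star_dotProduct_mulVec_eq_re {n : Type*} [Fintype n]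
    {A : Matrix n n ℂ} (hA : A.IsHermitian) (x : n → ℂ) :
    star x ⬝ᵥ A *ᵥ x = ((star x ⬝ᵥ A *ᵥ x).re : ℂ) :=
  Complex.ext rfl (by simpa using hA.im_star_dotProduct_mulVec_self x)

theorem lower_bound_of_choi_form_nonneg {N τ α q s : ℝ} (hN : 1 < N) (hα : 0 < α)
    (hτ : 0 < τ) (hNα : τ < N * α)
    (h : 0 ≤ α⁻¹ * q + (N / τ - 1 / α)⁻¹ * ((s - α⁻¹ * q) * (τ⁻¹ - α⁻¹))) :
    (τ - α) / (N - 1) * s ≤ q := by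
  have hgap : 0 < N * α - τ := by linarith
  have hcleared : (α⁻¹ * q + (N / τ - 1 / α)⁻¹ * ((s - α⁻¹ * q) * (τ⁻¹ - α⁻¹))) * (N * α - τ) =
      (N - 1) * q + (α - τ) * s := by
    have : α * N - τ ≠ 0 := by linarith
    field_simp
    ring
  have h' : 0 ≤ (N - 1) * q + (α - τ) * s := hcleared ▸ mul_nonneg h hgap.le
  rw [div_mul_eq_mul_div, div_le_iff₀ (by linarith)]
  linarith

theorem choi_posSemidef_lower_bound_general (N : ℕ) (hN : 2 ≤ N)
    (A : Matrix (Fin N) (Fin N) ℂ) (hA : A.IsHermitian)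
    (v : Fin N → ℂ) (hv : star v ⬝ᵥ v = 1)
    (τ α : ℝ)
    (hα0 : 0 < α) (hτ0 : 0 < τ) (hNα : τ < (N : ℝ) * α)
    (P : Matrix (Fin N) (Fin N) ℂ) (hP : P = vecMulVec (star v) v)
    (Z : Matrix (Fin N × Fin N) (Fin N × Fin N) ℂ)
    (hZ : Z = ((α : ℂ))⁻¹ • (A ⊗ₖ P) +
      ((((N : ℝ) / τ - 1 / α : ℝ) : ℂ))⁻¹ •
        ((1 - ((α : ℂ))⁻¹ • A) ⊗ₖ (((τ : ℂ))⁻¹ • 1 - ((α : ℂ))⁻¹ • P)))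
    (hZpsd : Z.PosSemidef) :
    (A - ((((τ - α) / ((N : ℝ) - 1)) : ℝ) : ℂ) • 1).PosSemidef := by
  refine .of_dotProduct_mulVec_nonneg
    (hA.sub (isHermitian_one.smul (Complex.conj_ofReal _))) fun x => ?_
  have hPv : v ⬝ᵥ P *ᵥ star v = 1 := by
    rw [hP, dotProduct_vecMulVec_star_mulVec_star, hv, one_mul]
  have hv' : v ⬝ᵥ star v = 1 := by rw [dotProduct_comm, hv]
  have hform := hZpsd.dotProduct_mulVec_nonneg (fun p => x p.1 * star v p.2)
  simp only [hZ, add_mulVec, smul_mulVec, dotProduct_add, dotProduct_smul,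
    star_dotProduct_kronecker_mulVec, star_star, sub_mulVec, one_mulVec, dotProduct_sub, hPv, hv',
    smul_eq_mul, mul_one] at hform
  simp only [sub_mulVec, smul_mulVec, one_mulVec, dotProduct_sub, dotProduct_smul, smul_eq_mul]
  rw [hA.star_dotProduct_mulVec_eq_re x] at hform ⊢
  rw [show star x ⬝ᵥ x = ((star x ⬝ᵥ x).re : ℂ) by
    simpa using isHermitian_one.star_dotProduct_mulVec_eq_re x] at hform ⊢
  rw [← Complex.ofReal_mul, ← Complex.ofReal_sub, Complex.zero_le_real, sub_nonneg]
  exact lower_bound_of_choi_form_nonneg (by exact_mod_cast hN) hα0 hτ0 hNα (by exact_mod_cast hform)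

/-- If the Choi matrix `Z_A` is positive semidefinite then
`A − ((τ − α)/(N − 1))·𝟙` is positive semidefinite. -/
theorem choi_posSemidef_lower_bound (N : ℕ) (hN : 2 ≤ N)
    (A : Matrix (Fin N) (Fin N) ℂ) (hA : A.IsHermitian)
    (v : Fin N → ℂ) (hv : star v ⬝ᵥ v = 1)
    (τ α : ℝ) (hτ : A.trace = (τ : ℂ)) (hα : star v ⬝ᵥ A.mulVec v = (α : ℂ))
    (hα0 : 0 < α) (hτ0 : 0 < τ) (hNα : τ < (N : ℝ) * α)
    (P : Matrix (Fin N) (Fin N) ℂ) (hP : P = vecMulVec (star v) v)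
    (Z : Matrix (Fin N × Fin N) (Fin N × Fin N) ℂ)
    (hZ : Z = ((α : ℂ))⁻¹ • (A ⊗ₖ P) +
      ((((N : ℝ) / τ - 1 / α : ℝ) : ℂ))⁻¹ •
        ((1 - ((α : ℂ))⁻¹ • A) ⊗ₖ (((τ : ℂ))⁻¹ • 1 - ((α : ℂ))⁻¹ • P)))
    (hZpsd : Z.PosSemidef) :
    (A - ((((τ - α) / ((N : ℝ) - 1)) : ℝ) : ℂ) • 1).PosSemidef :=
  choi_posSemidef_lower_bound_general N hN A hA v hv τ α hα0 hτ0 hNα P hP Z hZ hZpsd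
end

section
/- Let N ≥ 2, let A be an N×N complex matrix with τ = tr A, let v ∈ ℂ^N be a unit vector with α = ⟨v, A v⟩, and assume τ ≠ 0, α ≠ 0 and Nα ≠ τ. Then the map Φ† defined by Φ†[B] = (⟨v, B v⟩/α)·A + ((tr B/τ − ⟨v, B v⟩/α)/(N/τ − 1/α))·(𝟙 − A/α) is idempotent: for every N×N complex matrix B, Φ†[Φ†[B]] = Φ†[B]. -/
/-!
`Φ B = φ B • A + ψ B • (𝟙 - A / α)` for the linear functionals `φ B = ⟨v, B v⟩ / α` and
`ψ B = (tr B / τ - ⟨v, B v⟩ / α) / (N / τ - 1 / α)`, and `(φ, ψ)` is biorthogonal to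
`(A, 𝟙 - A / α)`: `⟨v, v⟩ = 1` gives `φ (𝟙 - A / α) = 0`, and `tr 𝟙 = N` gives `ψ (𝟙 - A / α) = 1`.
A map `B ↦ φ B • x + ψ B • y` with biorthogonal `(φ, ψ)` and `(x, y)` is a projection.
-/

open Matrix

theorem LinearMap.smul_add_smul_idem_of_biorthogonal {R M : Type*} [CommSemiring R]
    [AddCommMonoid M] [Module R M] (φ ψ : M →ₗ[R] R) {x y : M} (hφx : φ x = 1) (hφy : φ y = 0)
    (hψx : ψ x = 0) (hψy : ψ y = 1) (B : M) :
    φ (φ B • x + ψ B • y) • x + ψ (φ B • x + ψ B • y) • y = φ B • x + ψ B • y := by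
  simp [hφx, hφy, hψx, hψy]

def Matrix.expectationLinearMap {n R : Type*} [Fintype n] [CommSemiring R] [Star R]
    (v : n → R) : Matrix n n R →ₗ[R] R where
  toFun B := star v ⬝ᵥ B *ᵥ v
  map_add' B C := by rw [add_mulVec, dotProduct_add]
  map_smul' c B := by rw [smul_mulVec, dotProduct_smul, RingHom.id_apply]

theorem phiDagger_idempotent_general (N : ℕ)
    (A : Matrix (Fin N) (Fin N) ℂ)
    (v : Fin N → ℂ) (hv : star v ⬝ᵥ v = 1)
    (τ α : ℂ) (hτ : A.trace = τ) (hα : star v ⬝ᵥ A.mulVec v = α)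
    (hτ0 : τ ≠ 0) (hα0 : α ≠ 0) (hNα : (N : ℂ) * α ≠ τ)
    (Φ : Matrix (Fin N) (Fin N) ℂ → Matrix (Fin N) (Fin N) ℂ)
    (hΦ : ∀ B, Φ B = ((star v ⬝ᵥ B.mulVec v) / α) • A +
      ((B.trace / τ - (star v ⬝ᵥ B.mulVec v) / α) / ((N : ℂ) / τ - 1 / α)) •
        (1 - α⁻¹ • A)) :
    ∀ B, Φ (Φ B) = Φ B := by
  have hD : (N : ℂ) / τ - 1 / α ≠ 0 := by
    rw [div_sub_div _ _ hτ0 hα0, div_ne_zero_iff]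
    exact ⟨sub_ne_zero.mpr (by simpa using hNα), mul_ne_zero hτ0 hα0⟩
  set D := (N : ℂ) / τ - 1 / α
  set E := expectationLinearMap v
  have hE1 : E 1 = 1 := by simpa [E, expectationLinearMap] using hv
  have hEA : E A = α := hα
  set φ := α⁻¹ • E
  set ψ := D⁻¹ • (τ⁻¹ • traceLinearMap (Fin N) ℂ ℂ - φ)
  have hΦ' : ∀ B, Φ B = φ B • A + ψ B • (1 - α⁻¹ • A) := fun B => by
    rw [hΦ]; simp [φ, ψ, E, expectationLinearMap, div_eq_inv_mul]
  have hφx : φ A = 1 := by simp [φ, hEA, hα0]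
  have hφy : φ (1 - α⁻¹ • A) = 0 := by simp [φ, hEA, hE1, hα0]
  have hψx : ψ A = 0 := by simp [ψ, hφx, hτ, hτ0]
  have hψy : ψ (1 - α⁻¹ • A) = 1 := by
    have htr : τ⁻¹ * (1 - α⁻¹ • A).trace = D := by
      simp only [trace_sub, trace_one, trace_smul, hτ, Fintype.card_fin, smul_eq_mul, D]
      field_simp
    simp only [ψ, LinearMap.smul_apply, LinearMap.sub_apply, traceLinearMap_apply, hφy,
      sub_zero, smul_eq_mul, htr, inv_mul_cancel₀ hD]
  intro B
  rw [hΦ', hΦ', LinearMap.smul_add_smul_idem_of_biorthogonal φ ψ hφx hφy hψx hψy]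

/-- The map `Φ†[B] = (⟨v,Bv⟩/α)·A + ((tr B/τ − ⟨v,Bv⟩/α)/(N/τ − 1/α))·(𝟙 − A/α)`
is idempotent: `Φ†[Φ†[B]] = Φ†[B]` for every `B`. -/
theorem phiDagger_idempotent (N : ℕ) (hN : 2 ≤ N)
    (A : Matrix (Fin N) (Fin N) ℂ)
    (v : Fin N → ℂ) (hv : star v ⬝ᵥ v = 1)
    (τ α : ℂ) (hτ : A.trace = τ) (hα : star v ⬝ᵥ A.mulVec v = α)
    (hτ0 : τ ≠ 0) (hα0 : α ≠ 0) (hNα : (N : ℂ) * α ≠ τ)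
    (Φ : Matrix (Fin N) (Fin N) ℂ → Matrix (Fin N) (Fin N) ℂ)
    (hΦ : ∀ B, Φ B = ((star v ⬝ᵥ B.mulVec v) / α) • A +
      ((B.trace / τ - (star v ⬝ᵥ B.mulVec v) / α) / ((N : ℂ) / τ - 1 / α)) •
        (1 - α⁻¹ • A)) :
    ∀ B, Φ (Φ B) = Φ B :=
  phiDagger_idempotent_general N A v hv τ α hτ hα hτ0 hα0 hNα Φ hΦ
end

section
/- Let N ≥ 2, let A be an N×N complex matrix with τ = tr A, let v ∈ ℂ^N be a unit vector with α = ⟨v, A v⟩, and assume τ ≠ 0, α ≠ 0 and Nα ≠ τ. Then the partial trace of the Choi matrix Z_A = (1/α)·A ⊗ P + (1/(N/τ − 1/α))·(𝟙 − A/α) ⊗ (𝟙/τ − P/α) over the second tensor factor equals the identity: for all indices i, j ∈ {1, …, N}, ∑_{k=1}^{N} Z_A[(i,k),(j,k)] = δ_{ij}. -/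
open Matrix Kronecker

/-!
Tracing out the second factor of `A ⊗ B` gives `(tr B) • A`. Since `tr P = 1` and
`tr (𝟙/τ - P/α) = N/τ - 1/α`, the second summand of `Z_A` traces to `𝟙 - A/α`, which cancels
the `A/α` coming from the first.
-/

namespace Matrix

variable {m n R : Type*} [Fintype n]

def partialTraceRight [AddCommMonoid R] (M : Matrix (m × n) (m × n) R) : Matrix m m R :=
  of fun i j => ∑ k, M (i, k) (j, k)

@[simp]
theorem partialTraceRight_apply [AddCommMonoid R] (M : Matrix (m × n) (m × n) R) (i j : m) :
    partialTraceRight M i j = ∑ k, M (i, k) (j, k) :=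
  rfl

@[simp]
theorem partialTraceRight_add [AddCommMonoid R] (M M' : Matrix (m × n) (m × n) R) :
    partialTraceRight (M + M') = partialTraceRight M + partialTraceRight M' := by
  ext i j
  simp [Finset.sum_add_distrib]

@[simp]
theorem partialTraceRight_smul [Semiring R] (c : R) (M : Matrix (m × n) (m × n) R) :
    partialTraceRight (c • M) = c • partialTraceRight M := by
  ext i j
  simp [Finset.mul_sum]

@[simp]
theorem partialTraceRight_kronecker [CommSemiring R] (A : Matrix m m R) (B : Matrix n n R) :
    partialTraceRight (A ⊗ₖ B) = B.trace • A := by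
  ext i j
  simp [trace, Finset.mul_sum, mul_comm]

end Matrix

theorem div_sub_one_div_ne_zero {K : Type*} [Field K] {n τ α : K} (hτ : τ ≠ 0) (hα : α ≠ 0)
    (h : n * α ≠ τ) : n / τ - 1 / α ≠ 0 := by
  rw [div_sub_div _ _ hτ hα, mul_one]
  exact div_ne_zero (sub_ne_zero.mpr h) (mul_ne_zero hτ hα)

theorem choi_partialTrace_unital_general (N : ℕ)
    (A : Matrix (Fin N) (Fin N) ℂ)
    (v : Fin N → ℂ) (hv : star v ⬝ᵥ v = 1)
    (τ α : ℂ)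
    (hτ0 : τ ≠ 0) (hα0 : α ≠ 0) (hNα : (N : ℂ) * α ≠ τ)
    (P : Matrix (Fin N) (Fin N) ℂ) (hP : P = vecMulVec (star v) v)
    (Z : Matrix (Fin N × Fin N) (Fin N × Fin N) ℂ)
    (hZ : Z = α⁻¹ • (A ⊗ₖ P) +
      ((N : ℂ) / τ - 1 / α)⁻¹ •
        ((1 - α⁻¹ • A) ⊗ₖ (τ⁻¹ • 1 - α⁻¹ • P))) :
    ∀ i j : Fin N, ∑ k : Fin N, Z (i, k) (j, k) = (1 : Matrix (Fin N) (Fin N) ℂ) i j := by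
  have htrP : P.trace = 1 := by rw [hP, trace_vecMulVec, hv]
  have htr : (τ⁻¹ • 1 - α⁻¹ • P).trace = (N : ℂ) / τ - 1 / α := by
    simp [trace_sub, trace_smul, htrP, div_eq_inv_mul]
  have hZ1 : Z.partialTraceRight = 1 := by
    rw [hZ, partialTraceRight_add, partialTraceRight_smul, partialTraceRight_smul,
      partialTraceRight_kronecker, partialTraceRight_kronecker, htrP, htr, one_smul, smul_smul,
      inv_mul_cancel₀ (div_sub_one_div_ne_zero hτ0 hα0 hNα), one_smul, add_sub_cancel]
  exact fun i j => congrFun (congrFun hZ1 i) j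

/-- The partial trace over the second tensor factor of the Choi matrix
`Z_A = (1/α)·A ⊗ P + (1/(N/τ − 1/α))·(𝟙 − A/α) ⊗ (𝟙/τ − P/α)` is the identity:
`∑ₖ Z_A[(i,k),(j,k)] = δ_{ij}`. -/
theorem choi_partialTrace_unital (N : ℕ) (hN : 2 ≤ N)
    (A : Matrix (Fin N) (Fin N) ℂ)
    (v : Fin N → ℂ) (hv : star v ⬝ᵥ v = 1)
    (τ α : ℂ) (hτ : A.trace = τ) (hα : star v ⬝ᵥ A.mulVec v = α)
    (hτ0 : τ ≠ 0) (hα0 : α ≠ 0) (hNα : (N : ℂ) * α ≠ τ)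
    (P : Matrix (Fin N) (Fin N) ℂ) (hP : P = vecMulVec (star v) v)
    (Z : Matrix (Fin N × Fin N) (Fin N × Fin N) ℂ)
    (hZ : Z = α⁻¹ • (A ⊗ₖ P) +
      ((N : ℂ) / τ - 1 / α)⁻¹ •
        ((1 - α⁻¹ • A) ⊗ₖ (τ⁻¹ • 1 - α⁻¹ • P))) :
    ∀ i j : Fin N, ∑ k : Fin N, Z (i, k) (j, k) = (1 : Matrix (Fin N) (Fin N) ℂ) i j :=
  choi_partialTrace_unital_general N A v hv τ α hτ0 hα0 hNα P hP Z hZ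
end

section
/- Let N ≥ 2, let A be a Hermitian N×N complex matrix with τ = tr A, let v ∈ ℂ^N be a unit vector with α = ⟨v, A v⟩, and assume τ ≠ 0, α ≠ 0 and Nα ≠ τ. Then the Choi matrix Z_A = (1/α)·A ⊗ P + (1/(N/τ − 1/α))·(𝟙 − A/α) ⊗ (𝟙/τ − P/α) satisfies the fixed-point condition: the partial trace over the second factor of Z_A·(𝟙 ⊗ Aᵀ) equals A, i.e. for all indices i, j ∈ {1, …, N}, ∑_{k=1}^{N} (Z_A·(𝟙 ⊗ Aᵀ))[(i,k),(j,k)] = A[i,j]. -/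
/-!
Tracing out the second factor of `(X ⊗ Y) * (1 ⊗ Aᵀ)` leaves `tr (Y Aᵀ) • X`. For `Y = P`
this factor is `⟨v, A v⟩ = α`, so the first summand of `Z_A` contributes exactly `A`; for
`Y = 1/τ - P/α` it is `tr A / τ - α / α = 0`, so the second summand contributes nothing,
whatever its coefficient.
-/

open Matrix Kronecker

namespace Matrix

variable {R m m' n : Type*} [CommSemiring R] [Fintype n]

def traceRight : Matrix (m × n) (m' × n) R →ₗ[R] Matrix m m' R where
  toFun Z := of fun i j ↦ ∑ k, Z (i, k) (j, k)
  map_add' Z W := by ext i j; simp [Finset.sum_add_distrib]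
  map_smul' c Z := by ext i j; simp [Finset.mul_sum]

theorem traceRight_apply (Z : Matrix (m × n) (m' × n) R) (i : m) (j : m') :
    traceRight Z i j = ∑ k, Z (i, k) (j, k) := rfl

theorem traceRight_kronecker (X : Matrix m m' R) (Y : Matrix n n R) :
    traceRight (X ⊗ₖ Y) = trace Y • X := by
  ext i j
  simp [traceRight_apply, trace, ← Finset.mul_sum, mul_comm]

theorem traceRight_kronecker_mul_one_kronecker [Fintype m'] [DecidableEq m']
    (X : Matrix m m' R) (Y M : Matrix n n R) :
    traceRight ((X ⊗ₖ Y) * ((1 : Matrix m' m' R) ⊗ₖ M)) = trace (Y * M) • X := by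
  rw [← mul_kronecker_mul, Matrix.mul_one, traceRight_kronecker]

theorem trace_vecMulVec_mul_transpose [Fintype m] (w v : m → R) (A : Matrix m m R) :
    trace (vecMulVec w v * Aᵀ) = w ⬝ᵥ A *ᵥ v := by
  rw [vecMulVec_mul, vecMul_transpose, trace_vecMulVec]

end Matrix

theorem choi_fixed_point_condition_general (N : ℕ)
    (A : Matrix (Fin N) (Fin N) ℂ)
    (v : Fin N → ℂ)
    (τ α : ℝ) (hτ : A.trace = (τ : ℂ)) (hα : star v ⬝ᵥ A.mulVec v = (α : ℂ))
    (hτ0 : τ ≠ 0) (hα0 : α ≠ 0)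
    (P : Matrix (Fin N) (Fin N) ℂ) (hP : P = vecMulVec (star v) v)
    (Z : Matrix (Fin N × Fin N) (Fin N × Fin N) ℂ)
    (hZ : Z = ((α : ℂ))⁻¹ • (A ⊗ₖ P) +
      ((((N : ℝ) / τ - 1 / α : ℝ) : ℂ))⁻¹ •
        ((1 - ((α : ℂ))⁻¹ • A) ⊗ₖ (((τ : ℂ))⁻¹ • 1 - ((α : ℂ))⁻¹ • P))) :
    ∀ i j : Fin N,
      ∑ k : Fin N, (Z * ((1 : Matrix (Fin N) (Fin N) ℂ) ⊗ₖ Aᵀ)) (i, k) (j, k) = A i j := by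
  have hPA : trace (P * Aᵀ) = α := by rw [hP, trace_vecMulVec_mul_transpose, hα]
  have h1A : trace ((1 : Matrix (Fin N) (Fin N) ℂ) * Aᵀ) = τ := by
    rw [one_mul, trace_transpose, hτ]
  have hα' : (α : ℂ) ≠ 0 := by exact_mod_cast hα0
  have hτ' : (τ : ℂ) ≠ 0 := by exact_mod_cast hτ0
  have hpartial : traceRight (Z * ((1 : Matrix (Fin N) (Fin N) ℂ) ⊗ₖ Aᵀ)) = A := by
    simp only [hZ, add_mul, smul_mul, map_add, map_smul, traceRight_kronecker_mul_one_kronecker,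
      sub_mul, trace_sub, trace_smul, hPA, h1A, smul_eq_mul, inv_mul_cancel₀ hα',
      inv_mul_cancel₀ hτ', sub_self, zero_smul, smul_zero, add_zero, smul_smul, one_smul]
  intro i j
  rw [← traceRight_apply, hpartial]

/-- The Choi matrix `Z_A` satisfies the fixed-point condition: the partial
trace over the second factor of `Z_A·(𝟙 ⊗ Aᵀ)` equals `A`, i.e.
`∑ₖ (Z_A·(𝟙 ⊗ Aᵀ))[(i,k),(j,k)] = A[i,j]`. -/
theorem choi_fixed_point_condition (N : ℕ) (hN : 2 ≤ N)
    (A : Matrix (Fin N) (Fin N) ℂ) (hA : A.IsHermitian)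
    (v : Fin N → ℂ) (hv : star v ⬝ᵥ v = 1)
    (τ α : ℝ) (hτ : A.trace = (τ : ℂ)) (hα : star v ⬝ᵥ A.mulVec v = (α : ℂ))
    (hτ0 : τ ≠ 0) (hα0 : α ≠ 0) (hNα : (N : ℝ) * α ≠ τ)
    (P : Matrix (Fin N) (Fin N) ℂ) (hP : P = vecMulVec (star v) v)
    (Z : Matrix (Fin N × Fin N) (Fin N × Fin N) ℂ)
    (hZ : Z = ((α : ℂ))⁻¹ • (A ⊗ₖ P) +
      ((((N : ℝ) / τ - 1 / α : ℝ) : ℂ))⁻¹ •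
        ((1 - ((α : ℂ))⁻¹ • A) ⊗ₖ (((τ : ℂ))⁻¹ • 1 - ((α : ℂ))⁻¹ • P))) :
    ∀ i j : Fin N,
      ∑ k : Fin N, (Z * ((1 : Matrix (Fin N) (Fin N) ℂ) ⊗ₖ Aᵀ)) (i, k) (j, k) = A i j :=
  choi_fixed_point_condition_general N A v τ α hτ hα hτ0 hα0 P hP Z hZ
end

section
/- Let N ≥ 2, let A be a Hermitian N×N complex matrix with spectral decomposition A = ∑_i a_i u_i u_i* for an orthonormal basis {u_i} of ℂ^N and real eigenvalues a_i, τ = tr A, let v ∈ ℂ^N be a unit vector with α = ⟨v, A v⟩, let {w_j} be an orthonormal basis of ℂ^N with w_r = v̄ for a fixed index r, and assume α ≠ 0, τ ≠ 0, Nα ≠ τ, together with the nonnegativity of all radicands: a_i/α ≥ 0 for all i, and ((1 − a_i/α)/(N/τ − 1/α))·(1/τ − δ_{jr}/α) ≥ 0 for all i, j. Define B_i† = √(a_i/α)·u_i v* and C_ij† = √(((1 − a_i/α)/(N/τ − 1/α))·(1/τ − δ_{jr}/α))·u_i w_j*. Then ∑_i B_i† B_i + ∑_{i,j} C_ij† C_ij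 = 𝟙. -/
open Matrix

lemma outer_mul_outer {N : ℕ} (x y : Fin N → ℂ) (hx : star x ⬝ᵥ x = 1) :
    vecMulVec y (star x) * (vecMulVec y (star x))ᴴ = vecMulVec y (star y) := by
  have hx' : ∑ m, star (x m) * x m = 1 := by
    simpa [dotProduct] using hx
  ext k l
  simp only [mul_apply, vecMulVec_apply, conjTranspose_apply, Pi.star_apply, star_mul',
    star_star]
  calc ∑ m, y k * star (x m) * (star (y l) * x m)
      = (∑ m, star (x m) * x m) * (y k * star (y l)) := by
        rw [Finset.sum_mul]; exact Finset.sum_congr rfl fun m _ => by ring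
    _ = y k * star (y l) := by rw [hx', one_mul]

lemma sum_outer_eq_one {N : ℕ} (u : Fin N → Fin N → ℂ)
    (hu : ∀ i j, star (u i) ⬝ᵥ u j = if i = j then 1 else 0) :
    ∑ i, vecMulVec (u i) (star (u i)) = 1 := by
  set U : Matrix (Fin N) (Fin N) ℂ := Matrix.of u with hU
  have h1 : U * Uᴴ = 1 := by
    ext i j
    have := hu j i
    simp only [dotProduct, Pi.star_apply] at this
    simp only [mul_apply, conjTranspose_apply, hU, Matrix.of_apply, one_apply]
    calc ∑ k, u i k * star (u j k) = ∑ k, star (u j k) * u i k := by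
          exact Finset.sum_congr rfl fun k _ => by ring
      _ = _ := by rw [this]; simp [eq_comm]
  have h2 : Uᴴ * U = 1 := mul_eq_one_comm.mp h1
  ext k l
  have h3 := congrArg (fun M => star (M k l)) h2
  simp only [mul_apply, conjTranspose_apply, hU, Matrix.of_apply, one_apply, star_sum,
    star_mul', star_star] at h3
  simp only [Matrix.sum_apply, vecMulVec_apply, Pi.star_apply, one_apply]
  rw [h3]
  split <;> simp

/-- With `A = ∑ aᵢ uᵢ uᵢ*` Hermitian, `v` a unit vector, `α = ⟨v, A v⟩`,
`{wⱼ}` an orthonormal basis with `w_r = v̄`, and all radicands nonnegative, the Kraus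
operators `Bᵢ† = √(aᵢ/α)·uᵢ v*` and `Cᵢⱼ† = √(((1 − aᵢ/α)/(N/τ − 1/α))·(1/τ − δ_{jr}/α))·uᵢ wⱼ*`
satisfy the unitality relation `∑ᵢ Bᵢ† Bᵢ + ∑ᵢⱼ Cᵢⱼ† Cᵢⱼ = 𝟙`. -/
theorem kraus_unitality (N : ℕ) (hN : 2 ≤ N)
    (a : Fin N → ℝ) (u : Fin N → Fin N → ℂ)
    (hu : ∀ i j, star (u i) ⬝ᵥ u j = if i = j then 1 else 0)
    (A : Matrix (Fin N) (Fin N) ℂ) (hA : A.IsHermitian)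
    (hAdef : A = ∑ i, ((a i : ℝ) : ℂ) • vecMulVec (u i) (star (u i)))
    (v : Fin N → ℂ) (hv : star v ⬝ᵥ v = 1)
    (τ α : ℝ) (hτ : A.trace = (τ : ℂ)) (hα : star v ⬝ᵥ A.mulVec v = (α : ℂ))
    (w : Fin N → Fin N → ℂ)
    (hw : ∀ i j, star (w i) ⬝ᵥ w j = if i = j then 1 else 0)
    (r : Fin N) (hwr : w r = star v)
    (hα0 : α ≠ 0) (hτ0 : τ ≠ 0) (hNα : (N : ℝ) * α ≠ τ)
    (hrad1 : ∀ i, 0 ≤ a i / α)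
    (hrad2 : ∀ i j : Fin N,
      0 ≤ ((1 - a i / α) / ((N : ℝ) / τ - 1 / α)) *
        (1 / τ - (if j = r then 1 else 0) / α)) :
    (∑ i, (Real.sqrt (a i / α) • vecMulVec (u i) (star v)) *
        (Real.sqrt (a i / α) • vecMulVec (u i) (star v))ᴴ) +
      (∑ i, ∑ j,
        (Real.sqrt (((1 - a i / α) / ((N : ℝ) / τ - 1 / α)) *
            (1 / τ - (if j = r then 1 else 0) / α)) • vecMulVec (u i) (star (w j))) *
          (Real.sqrt (((1 - a i / α) / ((N : ℝ) / τ - 1 / α)) *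
            (1 / τ - (if j = r then 1 else 0) / α)) • vecMulVec (u i) (star (w j)))ᴴ) =
      (1 : Matrix (Fin N) (Fin N) ℂ) := by
  have hD : (N : ℝ) / τ - 1 / α ≠ 0 := by
    intro h
    apply hNα
    field_simp at h
    linarith
  have hsmul : ∀ (c : ℝ) (M : Matrix (Fin N) (Fin N) ℂ), 0 ≤ c →
      (Real.sqrt c • M) * (Real.sqrt c • M)ᴴ = c • (M * Mᴴ) := by
    intro c M hc
    rw [conjTranspose_smul, star_trivial, smul_mul_assoc, mul_smul_comm, smul_smul,
      Real.mul_self_sqrt hc]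
  have hB : ∀ i, (Real.sqrt (a i / α) • vecMulVec (u i) (star v)) *
      (Real.sqrt (a i / α) • vecMulVec (u i) (star v))ᴴ
      = (a i / α) • vecMulVec (u i) (star (u i)) := by
    intro i
    rw [hsmul _ _ (hrad1 i), outer_mul_outer v (u i) hv]
  have hC : ∀ i j, (Real.sqrt (((1 - a i / α) / ((N : ℝ) / τ - 1 / α)) *
            (1 / τ - (if j = r then 1 else 0) / α)) • vecMulVec (u i) (star (w j))) *
          (Real.sqrt (((1 - a i / α) / ((N : ℝ) / τ - 1 / α)) *
            (1 / τ - (if j = r then 1 else 0) / α)) • vecMulVec (u i) (star (w j)))ᴴ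
      = (((1 - a i / α) / ((N : ℝ) / τ - 1 / α)) *
            (1 / τ - (if j = r then 1 else 0) / α)) • vecMulVec (u i) (star (u i)) := by
    intro i j
    have hwj : star (w j) ⬝ᵥ w j = 1 := by simpa using hw j j
    rw [hsmul _ _ (hrad2 i j), outer_mul_outer (w j) (u i) hwj]
  simp only [hB, hC]
  have hc : ∀ i, ∑ j, ((1 - a i / α) / ((N : ℝ) / τ - 1 / α)) *
      (1 / τ - (if j = r then 1 else 0) / α) = 1 - a i / α := by
    intro i
    rw [← Finset.mul_sum]
    have hs : ∑ j : Fin N, (1 / τ - (if j = r then 1 else 0) / α) = (N : ℝ) / τ - 1 / α := by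
      rw [Finset.sum_sub_distrib]
      simp [Finset.sum_ite_eq', Finset.card_univ, div_eq_mul_inv]
    rw [hs, div_mul_cancel₀ _ hD]
  calc (∑ i, (a i / α) • vecMulVec (u i) (star (u i))) +
      ∑ i, ∑ j, (((1 - a i / α) / ((N : ℝ) / τ - 1 / α)) *
        (1 / τ - (if j = r then 1 else 0) / α)) • vecMulVec (u i) (star (u i))
      = ∑ i, ((a i / α) + (1 - a i / α)) • vecMulVec (u i) (star (u i)) := by
        rw [← Finset.sum_add_distrib]
        refine Finset.sum_congr rfl fun i _ => ?_
        rw [← Finset.sum_smul, hc i, add_smul]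
    _ = ∑ i, vecMulVec (u i) (star (u i)) := by
        refine Finset.sum_congr rfl fun i _ => ?_
        have : a i / α + (1 - a i / α) = 1 := by ring
        rw [this, one_smul]
    _ = 1 := sum_outer_eq_one u hu
end

section
/- Let N ≥ 2, let A be a Hermitian N×N complex matrix with spectral decomposition A = ∑_i a_i u_i u_i* for an orthonormal basis {u_i} of ℂ^N and real eigenvalues a_i, τ = tr A, let v ∈ ℂ^N be a unit vector with α = ⟨v, A v⟩, let {w_j} be an orthonormal basis of ℂ^N with w_r = v̄ for a fixed index r, assume α ≠ 0, τ ≠ 0, Nα ≠ τ, and assume ((1 − a_i/α)/(N/τ − 1/α))·(1/τ − δ_{jr}/α) ≥ 0 for all i, j. Define C_ij† = √(((1 − a_i/α)/(N/τ − 1/α))·(1/τ − δ_{jr}/α))·u_i w_j*. Then ∑_{i,j} C_ij† C_ij = 𝟙 − A/α. -/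
/-!
Each term `Cᵢⱼ† Cᵢⱼ` equals `cᵢⱼ uᵢ uᵢ*`, because `wⱼ` is a unit vector and the square root
squares back to the nonnegative radicand `cᵢⱼ`. Summing over `j`, the factor
`∑ⱼ (1/τ − δⱼᵣ/α) = N/τ − 1/α` cancels the denominator of `cᵢⱼ`, leaving
`∑ᵢ (1 − aᵢ/α) uᵢ uᵢ*`, which is `𝟙 − A/α` by completeness of the orthonormal basis `{uᵢ}`.
-/

open Matrix

namespace Matrix

variable {n R : Type*} [Fintype n]

theorem sum_vecMulVec_star_self_eq_one [CommRing R] [StarRing R] [DecidableEq n]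
    (u : n → n → R) (hu : ∀ i j, star (u i) ⬝ᵥ u j = if i = j then 1 else 0) :
    ∑ i, vecMulVec (u i) (star (u i)) = 1 := by
  set U : Matrix n n R := (of u)ᵀ
  have hUU : Uᴴ * U = 1 := by
    ext i j
    simpa [U, mul_apply, one_apply, dotProduct] using hu i j
  ext k l
  rw [← mul_eq_one_comm.mp hUU]
  simp [U, mul_apply, vecMulVec_apply, sum_apply]

theorem vecMulVec_star_mul_conjTranspose [CommSemiring R] [StarRing R] (x y : n → R) :
    vecMulVec x (star y) * (vecMulVec x (star y))ᴴ = (star y ⬝ᵥ y) • vecMulVec x (star x) := by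
  ext k l
  simp [vecMulVec_mul_vecMulVec, vecMulVec_apply, mul_left_comm]

theorem sum_sqrt_smul_vecMulVec_mul_conjTranspose {𝕜 ι κ : Type*} [RCLike 𝕜]
    [Fintype ι] [Fintype κ] (c : ι → κ → ℝ) (hc : ∀ i j, 0 ≤ c i j)
    (u : ι → n → 𝕜) (w : κ → n → 𝕜) (hw : ∀ j, star (w j) ⬝ᵥ w j = 1) :
    ∑ i, ∑ j, (√(c i j) • vecMulVec (u i) (star (w j))) *
        (√(c i j) • vecMulVec (u i) (star (w j)))ᴴ =
      ∑ i, (∑ j, c i j) • vecMulVec (u i) (star (u i)) := by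
  simp only [conjTranspose_smul, star_trivial, smul_mul_smul_comm,
    vecMulVec_star_mul_conjTranspose, hw, one_smul, Real.mul_self_sqrt (hc _ _), Finset.sum_smul]

end Matrix

theorem sum_one_div_sub_ite_div {K ι : Type*} [DivisionRing K] [Fintype ι] [DecidableEq ι]
    (τ α : K) (r : ι) :
    ∑ j, (1 / τ - (if j = r then 1 else 0) / α) = Fintype.card ι / τ - 1 / α := by
  simp [Finset.sum_sub_distrib, div_eq_mul_inv]

theorem kraus_C_sum_general (N : ℕ)
    (a : Fin N → ℝ) (u : Fin N → Fin N → ℂ)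
    (hu : ∀ i j, star (u i) ⬝ᵥ u j = if i = j then 1 else 0)
    (A : Matrix (Fin N) (Fin N) ℂ)
    (hAdef : A = ∑ i, ((a i : ℝ) : ℂ) • vecMulVec (u i) (star (u i)))
    (τ α : ℝ)
    (w : Fin N → Fin N → ℂ)
    (hw : ∀ i j, star (w i) ⬝ᵥ w j = if i = j then 1 else 0)
    (r : Fin N)
    (hα0 : α ≠ 0) (hτ0 : τ ≠ 0) (hNα : (N : ℝ) * α ≠ τ)
    (hrad : ∀ i j : Fin N,
      0 ≤ ((1 - a i / α) / ((N : ℝ) / τ - 1 / α)) *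
        (1 / τ - (if j = r then 1 else 0) / α)) :
    (∑ i, ∑ j,
        (Real.sqrt (((1 - a i / α) / ((N : ℝ) / τ - 1 / α)) *
            (1 / τ - (if j = r then 1 else 0) / α)) • vecMulVec (u i) (star (w j))) *
          (Real.sqrt (((1 - a i / α) / ((N : ℝ) / τ - 1 / α)) *
            (1 / τ - (if j = r then 1 else 0) / α)) • vecMulVec (u i) (star (w j)))ᴴ) =
      1 - ((α : ℂ))⁻¹ • A := by
  have hD : (N : ℝ) / τ - 1 / α ≠ 0 := by
    rw [div_sub_div _ _ hτ0 hα0, mul_one]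
    exact div_ne_zero (sub_ne_zero.mpr hNα) (mul_ne_zero hτ0 hα0)
  have hrow : ∀ i, ∑ j : Fin N, ((1 - a i / α) / ((N : ℝ) / τ - 1 / α)) *
      (1 / τ - (if j = r then 1 else 0) / α) = 1 - a i / α := fun i => by
    rw [← Finset.mul_sum, sum_one_div_sub_ite_div, Fintype.card_fin, div_mul_cancel₀ _ hD]
  rw [sum_sqrt_smul_vecMulVec_mul_conjTranspose _ hrad _ _ fun j => by simpa using hw j j]
  simp only [hrow]
  rw [hAdef, Finset.smul_sum, ← sum_vecMulVec_star_self_eq_one u hu, ← Finset.sum_sub_distrib]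
  refine Finset.sum_congr rfl fun i _ => ?_
  rw [sub_smul, one_smul, smul_smul, ← Complex.ofReal_inv, ← Complex.ofReal_mul, Complex.coe_smul,
    inv_mul_eq_div]

/-- With `A = ∑ aᵢ uᵢ uᵢ*` Hermitian, `v` a unit vector, `α = ⟨v, A v⟩`,
`{wⱼ}` an orthonormal basis with `w_r = v̄`, and all radicands nonnegative, the operators
`Cᵢⱼ† = √(((1 − aᵢ/α)/(N/τ − 1/α))·(1/τ − δ_{jr}/α))·uᵢ wⱼ*` satisfy
`∑ᵢⱼ Cᵢⱼ† Cᵢⱼ = 𝟙 − A/α`. -/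
theorem kraus_C_sum (N : ℕ) (hN : 2 ≤ N)
    (a : Fin N → ℝ) (u : Fin N → Fin N → ℂ)
    (hu : ∀ i j, star (u i) ⬝ᵥ u j = if i = j then 1 else 0)
    (A : Matrix (Fin N) (Fin N) ℂ) (hA : A.IsHermitian)
    (hAdef : A = ∑ i, ((a i : ℝ) : ℂ) • vecMulVec (u i) (star (u i)))
    (v : Fin N → ℂ) (hv : star v ⬝ᵥ v = 1)
    (τ α : ℝ) (hτ : A.trace = (τ : ℂ)) (hα : star v ⬝ᵥ A.mulVec v = (α : ℂ))
    (w : Fin N → Fin N → ℂ)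
    (hw : ∀ i j, star (w i) ⬝ᵥ w j = if i = j then 1 else 0)
    (r : Fin N) (hwr : w r = star v)
    (hα0 : α ≠ 0) (hτ0 : τ ≠ 0) (hNα : (N : ℝ) * α ≠ τ)
    (hrad : ∀ i j : Fin N,
      0 ≤ ((1 - a i / α) / ((N : ℝ) / τ - 1 / α)) *
        (1 / τ - (if j = r then 1 else 0) / α)) :
    (∑ i, ∑ j,
        (Real.sqrt (((1 - a i / α) / ((N : ℝ) / τ - 1 / α)) *
            (1 / τ - (if j = r then 1 else 0) / α)) • vecMulVec (u i) (star (w j))) *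
          (Real.sqrt (((1 - a i / α) / ((N : ℝ) / τ - 1 / α)) *
            (1 / τ - (if j = r then 1 else 0) / α)) • vecMulVec (u i) (star (w j)))ᴴ) =
      1 - ((α : ℂ))⁻¹ • A :=
  kraus_C_sum_general N a u hu A hAdef τ α w hw r hα0 hτ0 hNα hrad
end

section
/- Let d ≥ 1, let {w_j}_{j=1}^d be an orthonormal basis of ℂ^d, let {e_n}_{n=0}^{d−1} be the standard basis of ℂ^d, and let σ_1, …, σ_d be nonnegative reals. Then the charging rate φ = ∑_{j} ∑_{n=0}^{d−1} σ_j · n · |⟨w_j, e_n⟩|² satisfies φ ≤ max over all bijections π : {1,…,d} → {0,…,d−1} of ∑_j σ_j · π(j); in particular φ is bounded, and if ⟨w_j, e_n⟩ = δ_{j,n+1} (aligned bases, i.e. w_j = e_{j−1}) then φ = ∑_j σ_j (j−1). -/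
open Matrix

/-- The charging rate `φ = ∑ⱼₙ σⱼ·n·|⟨wⱼ, eₙ⟩|²` is bounded above by the
maximum over all bijections `π` of `∑ⱼ σⱼ·π(j)`; and if the bases are aligned
(`wⱼ = eⱼ₋₁`, i.e. `w j = Pi.single j 1` in 0-based indexing) then
`φ = ∑ⱼ σⱼ·(j−1)` (i.e. `∑ⱼ σⱼ·j` in 0-based indexing). -/
theorem charging_rate_bound (d : ℕ) (hd : 1 ≤ d)
    (w : Fin d → Fin d → ℂ)
    (hw : ∀ i j, star (w i) ⬝ᵥ w j = if i = j then 1 else 0)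
    (σv : Fin d → ℝ) (hσv : ∀ j, 0 ≤ σv j)
    (e : Fin d → Fin d → ℂ) (he : ∀ n, e n = Pi.single n 1)
    (φ : ℝ)
    (hφ : φ = ∑ j : Fin d, ∑ n : Fin d,
      σv j * ((n : ℕ) : ℝ) * Complex.normSq (star (w j) ⬝ᵥ e n)) :
    (φ ≤ (Finset.univ : Finset (Equiv.Perm (Fin d))).sup'
        Finset.univ_nonempty (fun π => ∑ j : Fin d, σv j * ((π j : ℕ) : ℝ))) ∧
      ((∀ j, w j = e j) → φ = ∑ j : Fin d, σv j * ((j : ℕ) : ℝ)) := by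
  have hin : ∀ j n, star (w j) ⬝ᵥ e n = starRingEnd ℂ (w j n) := by
    intro j n
    simp [dotProduct, he, Pi.single_apply, mul_ite, Finset.sum_ite_eq']
  set M : Matrix (Fin d) (Fin d) ℝ := Matrix.of fun j n => Complex.normSq (w j n) with hMdef
  have hφM : φ = ∑ j : Fin d, ∑ n : Fin d, σv j * ((n : ℕ) : ℝ) * M j n := by
    rw [hφ]
    refine Finset.sum_congr rfl fun j _ => Finset.sum_congr rfl fun n _ => ?_
    rw [hin]
    simp [hMdef]
  -- row sums
  have hrow : ∀ j, ∑ n, M j n = 1 := by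
    intro j
    have h := hw j j
    rw [if_pos rfl] at h
    simp only [dotProduct, Pi.star_apply] at h
    have h2 : ((∑ n, M j n : ℝ) : ℂ) = 1 := by
      push_cast
      rw [← h]
      refine Finset.sum_congr rfl fun n _ => ?_
      rw [hMdef]
      simp only [Matrix.of_apply]
      rw [Complex.normSq_eq_conj_mul_self]
      rfl
    exact_mod_cast h2
  -- column sums
  have hcol : ∀ n, ∑ j, M j n = 1 := by
    intro n
    have h1 : (Matrix.of w) * (Matrix.of w)ᴴ = 1 := by
      ext i j
      have h := hw j i
      simp only [dotProduct, Pi.star_apply] at h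
      simp only [Matrix.mul_apply, Matrix.conjTranspose_apply, Matrix.of_apply, Matrix.one_apply]
      rw [show (∑ k, w i k * star (w j k)) = ∑ k, star (w j k) * w i k from
        Finset.sum_congr rfl fun k _ => mul_comm _ _, h]
      simp [eq_comm]
    have h2 : (Matrix.of w)ᴴ * (Matrix.of w) = 1 := mul_eq_one_comm.mp h1
    have h3 := congrFun (congrFun h2 n) n
    simp only [Matrix.mul_apply, Matrix.conjTranspose_apply, Matrix.of_apply,
      Matrix.one_apply_eq] at h3
    have h4 : ((∑ j, M j n : ℝ) : ℂ) = 1 := by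
      push_cast
      rw [← h3]
      refine Finset.sum_congr rfl fun j _ => ?_
      rw [hMdef]
      simp only [Matrix.of_apply]
      rw [Complex.normSq_eq_conj_mul_self]
      rfl
    exact_mod_cast h4
  have hMds : M ∈ doublyStochastic ℝ (Fin d) := by
    rw [mem_doublyStochastic_iff_sum]
    exact ⟨fun i j => Complex.normSq_nonneg _, hrow, hcol⟩
  constructor
  · -- Birkhoff decomposition
    obtain ⟨c, hc0, hc1, hcM⟩ := exists_eq_sum_perm_of_mem_doublyStochastic hMds
    set S := (Finset.univ : Finset (Equiv.Perm (Fin d))).sup'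
        Finset.univ_nonempty (fun π => ∑ j : Fin d, σv j * ((π j : ℕ) : ℝ)) with hS
    have hMval : ∀ j n, M j n = ∑ π : Equiv.Perm (Fin d), c π * (π.permMatrix ℝ) j n := by
      intro j n
      rw [← congrFun (congrFun hcM j) n, Matrix.sum_apply]
      exact Finset.sum_congr rfl fun π _ => rfl
    have hperm : ∀ π : Equiv.Perm (Fin d),
        ∑ j : Fin d, ∑ n : Fin d, σv j * ((n : ℕ) : ℝ) * (π.permMatrix ℝ) j n
          = ∑ j : Fin d, σv j * ((π j : ℕ) : ℝ) := by
      intro π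
      refine Finset.sum_congr rfl fun j _ => ?_
      have hp : ∀ n : Fin d, (π.permMatrix ℝ) j n = if n = π j then 1 else 0 := by
        intro n
        simp [Equiv.Perm.permMatrix, PEquiv.toMatrix_apply, Equiv.toPEquiv_apply, eq_comm]
      simp only [hp, mul_ite, mul_one, mul_zero]
      rw [Finset.sum_ite_eq' Finset.univ (π j) (fun n => σv j * ((n : ℕ) : ℝ))]
      simp
    have step : ∀ j n : Fin d, σv j * ((n : ℕ) : ℝ) * M j n
        = ∑ π : Equiv.Perm (Fin d), c π * (σv j * ((n : ℕ) : ℝ) * (π.permMatrix ℝ) j n) := by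
      intro j n
      rw [hMval j n, Finset.mul_sum]
      exact Finset.sum_congr rfl fun π _ => by ring
    calc φ = ∑ π : Equiv.Perm (Fin d),
          c π * ∑ j : Fin d, σv j * ((π j : ℕ) : ℝ) := by
          rw [hφM]
          simp_rw [step]
          rw [show (∑ j : Fin d, ∑ n : Fin d, ∑ π : Equiv.Perm (Fin d),
              c π * (σv j * ((n : ℕ) : ℝ) * (π.permMatrix ℝ) j n))
            = ∑ π : Equiv.Perm (Fin d), ∑ j : Fin d, ∑ n : Fin d,
              c π * (σv j * ((n : ℕ) : ℝ) * (π.permMatrix ℝ) j n) from by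
            rw [Finset.sum_comm (γ := Equiv.Perm (Fin d))]
            exact Finset.sum_congr rfl fun j _ => Finset.sum_comm]
          refine Finset.sum_congr rfl fun π _ => ?_
          rw [← hperm π, Finset.mul_sum]
          exact Finset.sum_congr rfl fun j _ => by rw [Finset.mul_sum]
      _ ≤ ∑ π : Equiv.Perm (Fin d), c π * S := by
          refine Finset.sum_le_sum fun π _ => ?_
          exact mul_le_mul_of_nonneg_left
            (Finset.le_sup' (f := fun π => ∑ j : Fin d, σv j * ((π j : ℕ) : ℝ))
              (Finset.mem_univ π)) (hc0 π)
      _ = S := by rw [← Finset.sum_mul, hc1, one_mul]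
  · intro hwe
    rw [hφ]
    refine Finset.sum_congr rfl fun j _ => ?_
    have hns : ∀ n : Fin d, Complex.normSq (star (w j) ⬝ᵥ e n) = if n = j then 1 else 0 := by
      intro n
      rw [hin, hwe j, he j]
      rcases eq_or_ne n j with h | h
      · subst h; simp
      · simp [Pi.single_apply, h]
    rw [Finset.sum_congr rfl fun n _ => by rw [hns n]]
    simp only [mul_ite, mul_one, mul_zero]
    rw [Finset.sum_ite_eq' Finset.univ j (fun n => σv j * ((n : ℕ) : ℝ))]
    simp
end
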